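/- Let Γ be a finite connected simple graph of diameter 2 with vertex set V and base point v0 ∈ V, satisfying conditions (S1) and (S2). Let μ_1 = |S_1(v0)|, μ_2 = |S_2(v0)|, and m = |S_1(v_1) ∩ S_1(v0)| for an arbitrarily chosen v_1 ∈ S_1(v0). Then the structure constants satisfy: p_{1,1}^0 = 1/μ_1, p_{1,1}^1 = m/μ_1, p_{1,1}^2 = (μ_1 − 1 − m)/μ_1; p_{1,2}^0 = p_{2,1}^0 = 0, p_{1,2}^1 = p_{2,1}^1 = (μ_1 − 1 − m)/μ_2, p_{1,2}^2 = p_{2,1}^2 = (μ_2 − μ_1 + 1 + m)/μ_2; p_{2,2}^0 = 1/μ_2, p_{2,2}^1 = μ_1/μ_2 − μ_1(μ_1 − 1 − m)/μ_2², and p_{2,2}^2 = 1 − 1/μ_2 − μ_1/μ_2 + μ_1(μ_1 − 1 − m)/μ_2². -/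

import Mathlib

open Finset

noncomputable section

/-- The sphere of radius `k` around `v`: all vertices at graph distance `k` from `v`. -/
def sph {V : Type*} [Fintype V] (G : SimpleGraph V) (k : ℕ) (v : V) : Finset V :=
  Finset.univ.filter fun w => G.dist v w = k

/-- Eccentricity of a vertex. -/
def ecc {V : Type*} [Fintype V] (G : SimpleGraph V) (v : V) : ℕ :=
  Finset.univ.sup fun w => G.dist v w

/-- Diameter of the graph. -/
def gdiam {V : Type*} [Fintype V] (G : SimpleGraph V) : ℕ :=
  Finset.univ.sup fun v => ecc G v

/-- The `k`-adjacency matrix `A^(k)`. -/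
def Adjk {V : Type*} [Fintype V] (G : SimpleGraph V) (k : ℕ) : Matrix V V ℝ :=
  Matrix.of fun x y => if G.dist x y = k then (1 : ℝ) else 0

/-- The normalized `k`-adjacency matrix `A_k = (1/μ_k) A^(k)`. -/
def Anorm {V : Type*} [Fintype V] (G : SimpleGraph V) (v0 : V) (k : ℕ) : Matrix V V ℝ :=
  (((sph G k v0).card : ℝ))⁻¹ • Adjk G k

/-- The structure constant `p_{i,j}^k` of the random walk on `(Γ, v0)`. -/
def pcoef {V : Type*} [Fintype V] [DecidableEq V] (G : SimpleGraph V) (v0 : V)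
    (i j k : ℕ) : ℝ :=
  (1 / ((sph G i v0).card : ℝ)) *
    ∑ v ∈ sph G i v0, ((sph G j v ∩ sph G k v0).card : ℝ) / ((sph G j v).card : ℝ)

/-- The matrix `D : I × V`, with `(i,v)`-entry `1` if `d(v0,v) = i` and `0` otherwise. -/
def Dmat {V : Type*} [Fintype V] (G : SimpleGraph V) (v0 : V) :
    Matrix (Fin (gdiam G + 1)) V ℝ :=
  Matrix.of fun i v => if G.dist v0 v = (i : ℕ) then (1 : ℝ) else 0

/-- The `k`-transition matrix `P_k`, with `(i,j)`-entry `p_{k,j}^i`. -/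
def Pmat {V : Type*} [Fintype V] [DecidableEq V] (G : SimpleGraph V) (v0 : V) (k : ℕ) :
    Matrix (Fin (gdiam G + 1)) (Fin (gdiam G + 1)) ℝ :=
  Matrix.of fun i j => pcoef G v0 k (j : ℕ) (i : ℕ)

section Aux
set_option linter.unusedSectionVars false
variable {V : Type*} [Fintype V] [DecidableEq V] (G : SimpleGraph V)

lemma mem_sph {k : ℕ} {v w : V} : w ∈ sph G k v ↔ G.dist v w = k := by simp [sph]

lemma sph_inter_eq_filter (j : ℕ) (v : V) (T : Finset V) :
    sph G j v ∩ T = T.filter (fun w => G.dist v w = j) := by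
  ext w; simp [sph, and_comm]

lemma sph_zero (hconn : G.Connected) (v : V) : sph G 0 v = {v} := by
  ext w
  simp only [mem_sph, Finset.mem_singleton]
  constructor
  · intro h
    rcases SimpleGraph.dist_eq_zero_iff_eq_or_not_reachable.1 h with h | h
    · exact h.symm
    · exact absurd (hconn.preconnected v w) h
  · rintro rfl; exact SimpleGraph.dist_self

lemma card_part (hle : ∀ x y : V, G.dist x y ≤ 2) (v : V) (T : Finset V) :
    T.card = (sph G 0 v ∩ T).card + (sph G 1 v ∩ T).card + (sph G 2 v ∩ T).card := by
  have h := Finset.card_eq_sum_card_fiberwise (f := fun w => G.dist v w) (s := T)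
    (t := Finset.range 3) (fun x _ => Finset.mem_range.2 (Nat.lt_succ_of_le (hle v x)))
  rw [h]
  simp only [Finset.sum_range_succ, Finset.sum_range_zero, sph_inter_eq_filter]
  omega

lemma dc (A B : Finset V) :
    ∑ v ∈ A, (sph G 1 v ∩ B).card = ∑ w ∈ B, (sph G 1 w ∩ A).card := by
  have h : ∀ (C : Finset V) (v : V),
      (sph G 1 v ∩ C).card = ∑ w ∈ C, if G.dist v w = 1 then 1 else 0 := by
    intro C v
    rw [sph_inter_eq_filter, Finset.card_filter]
  simp only [h]
  rw [Finset.sum_comm]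
  refine Finset.sum_congr rfl fun w _ => Finset.sum_congr rfl fun v _ => ?_
  rw [SimpleGraph.dist_comm]

lemma exists_dist_two (hdiam : gdiam G = 2) (x : V) : ∃ u w : V, G.dist u w = 2 := by
  have hne : (Finset.univ : Finset V).Nonempty := ⟨x, Finset.mem_univ x⟩
  obtain ⟨u, -, hu⟩ := Finset.exists_mem_eq_sup Finset.univ hne (fun v => ecc G v)
  obtain ⟨w, -, hw⟩ := Finset.exists_mem_eq_sup Finset.univ hne (fun w => G.dist u w)
  have h1 : ecc G u = 2 := by rw [← hu]; exact hdiam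
  exact ⟨u, w, by rw [← hw]; exact h1⟩

lemma pcoef_eval (v0 : V)
    (hS1 : ∀ i : ℕ, i ≤ 2 → ∀ v w : V, (sph G i v).card = (sph G i w).card)
    (hS2 : ∀ i j k : ℕ, i ≤ 2 → j ≤ 2 → k ≤ 2 →
      ∀ v ∈ sph G k v0, ∀ w ∈ sph G k v0,
        (sph G i v ∩ sph G j v0).card = (sph G i w ∩ sph G j v0).card)
    (i j k : ℕ) (hi : i ≤ 2) (hj : j ≤ 2) (hk : k ≤ 2)
    (v : V) (hv : v ∈ sph G i v0) :
    pcoef G v0 i j k = ((sph G j v ∩ sph G k v0).card : ℝ) / ((sph G j v0).card : ℝ) := by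
  have hne : ((sph G i v0).card : ℝ) ≠ 0 :=
    Nat.cast_ne_zero.2 (Finset.card_ne_zero_of_mem hv)
  unfold pcoef
  rw [Finset.sum_congr rfl (fun w hw => ?_), Finset.sum_const, nsmul_eq_mul,
    one_div, inv_mul_cancel_left₀ hne]
  rw [hS2 j k i hj hk hi w hw v hv, hS1 j hj w v0]


end Aux

set_option maxHeartbeats 1000000 in
theorem stmt14 {V : Type*} [Fintype V] [DecidableEq V] (G : SimpleGraph V)
    (hconn : G.Connected) (v0 : V) (hdiam : gdiam G = 2)
    (hS1 : ∀ i : ℕ, i ≤ 2 → ∀ v w : V, (sph G i v).card = (sph G i w).card)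
    (hS2 : ∀ i j k : ℕ, i ≤ 2 → j ≤ 2 → k ≤ 2 →
      ∀ v ∈ sph G k v0, ∀ w ∈ sph G k v0,
        (sph G i v ∩ sph G j v0).card = (sph G i w ∩ sph G j v0).card)
    (v1 : V) (hv1 : v1 ∈ sph G 1 v0)
    (μ1 μ2 m : ℝ)
    (hμ1 : μ1 = ((sph G 1 v0).card : ℝ)) (hμ2 : μ2 = ((sph G 2 v0).card : ℝ))
    (hm : m = ((sph G 1 v1 ∩ sph G 1 v0).card : ℝ)) :
    pcoef G v0 1 1 0 = 1 / μ1 ∧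
    pcoef G v0 1 1 1 = m / μ1 ∧
    pcoef G v0 1 1 2 = (μ1 - 1 - m) / μ1 ∧
    pcoef G v0 1 2 0 = 0 ∧
    pcoef G v0 2 1 0 = 0 ∧
    pcoef G v0 1 2 1 = (μ1 - 1 - m) / μ2 ∧
    pcoef G v0 2 1 1 = (μ1 - 1 - m) / μ2 ∧
    pcoef G v0 1 2 2 = (μ2 - μ1 + 1 + m) / μ2 ∧
    pcoef G v0 2 1 2 = (μ2 - μ1 + 1 + m) / μ2 ∧
    pcoef G v0 2 2 0 = 1 / μ2 ∧
    pcoef G v0 2 2 1 = μ1 / μ2 - μ1 * (μ1 - 1 - m) / μ2 ^ 2 ∧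
    pcoef G v0 2 2 2 = 1 - 1 / μ2 - μ1 / μ2 + μ1 * (μ1 - 1 - m) / μ2 ^ 2 := by
  have hle : ∀ x y : V, G.dist x y ≤ 2 := by
    intro x y
    have h1 : G.dist x y ≤ ecc G x := Finset.le_sup (Finset.mem_univ y)
    have h2 : ecc G x ≤ gdiam G := Finset.le_sup (Finset.mem_univ x)
    omega
  have hic : ∀ A B : Finset V, (A ∩ B).card = (B ∩ A).card := fun A B => by
    rw [Finset.inter_comm]
  have hd01 : G.dist v0 v1 = 1 := (mem_sph G).1 hv1
  have hd10 : G.dist v1 v0 = 1 := by rw [SimpleGraph.dist_comm]; exact hd01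
  obtain ⟨u, w, huw⟩ := exists_dist_two G hdiam v0
  have h2pos : 0 < (sph G 2 v0).card := by
    rw [hS1 2 le_rfl v0 u]
    exact Finset.card_pos.2 ⟨w, (mem_sph G).2 huw⟩
  obtain ⟨v2, hv2⟩ := Finset.card_pos.1 h2pos
  have hd02 : G.dist v0 v2 = 2 := (mem_sph G).1 hv2
  have hd20 : G.dist v2 v0 = 2 := by rw [SimpleGraph.dist_comm]; exact hd02
  have hμ1pos : 0 < μ1 := by
    rw [hμ1]; exact_mod_cast Finset.card_pos.2 ⟨v1, hv1⟩
  have hμ2pos : 0 < μ2 := by rw [hμ2]; exact_mod_cast h2pos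
  have hμ1ne : μ1 ≠ 0 := ne_of_gt hμ1pos
  have hμ2ne : μ2 ≠ 0 := ne_of_gt hμ2pos
  -- singleton intersection helpers
  have hsing : ∀ (j : ℕ) (v x : V),
      (sph G j v ∩ ({x} : Finset V)).card = if G.dist v x = j then 1 else 0 := by
    intro j v x
    rw [sph_inter_eq_filter, Finset.filter_singleton]
    split <;> simp
  have hsing0 : ∀ (k : ℕ) (x y : V),
      (sph G 0 x ∩ sph G k y).card = if G.dist y x = k then 1 else 0 := by
    intro k x y
    rw [sph_zero G hconn, hic, hsing]
  have e110 : (sph G 1 v1 ∩ sph G 0 v0).card = 1 := by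
    rw [sph_zero G hconn, hsing, if_pos hd10]
  have e120 : (sph G 2 v1 ∩ sph G 0 v0).card = 0 := by
    rw [sph_zero G hconn, hsing, if_neg (by omega)]
  have e210 : (sph G 1 v2 ∩ sph G 0 v0).card = 0 := by
    rw [sph_zero G hconn, hsing, if_neg (by omega)]
  have e220 : (sph G 2 v2 ∩ sph G 0 v0).card = 1 := by
    rw [sph_zero G hconn, hsing, if_pos hd20]
  have e011 : (sph G 0 v1 ∩ sph G 1 v0).card = 1 := by rw [hsing0, if_pos hd01]
  have e021 : (sph G 0 v1 ∩ sph G 2 v0).card = 0 := by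
    rw [hsing0, if_neg (by omega)]
  have e012 : (sph G 0 v2 ∩ sph G 1 v0).card = 0 := by
    rw [hsing0, if_neg (by omega)]
  have e022 : (sph G 0 v2 ∩ sph G 2 v0).card = 1 := by rw [hsing0, if_pos hd02]
  -- partitions
  have P1 := card_part G hle v1 (sph G 1 v0)
  rw [e011] at P1
  have P2 := card_part G hle v1 (sph G 2 v0)
  rw [e021] at P2
  have P3 := card_part G hle v0 (sph G 1 v1)
  rw [hic (sph G 0 v0) (sph G 1 v1), hic (sph G 1 v0) (sph G 1 v1),
    hic (sph G 2 v0) (sph G 1 v1), e110, hS1 1 (by norm_num) v1 v0] at P3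
  have P4 := card_part G hle v0 (sph G 1 v2)
  rw [hic (sph G 0 v0) (sph G 1 v2), hic (sph G 1 v0) (sph G 1 v2),
    hic (sph G 2 v0) (sph G 1 v2), e210, hS1 1 (by norm_num) v2 v0] at P4
  have P5 := card_part G hle v2 (sph G 1 v0)
  rw [e012] at P5
  have P6 := card_part G hle v2 (sph G 2 v0)
  rw [e022] at P6
  -- double counting
  have DC : (sph G 1 v0).card * (sph G 1 v1 ∩ sph G 2 v0).card
      = (sph G 2 v0).card * (sph G 1 v2 ∩ sph G 1 v0).card := by
    have h := dc G (sph G 1 v0) (sph G 2 v0)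
    rw [Finset.sum_congr rfl (fun v hv =>
        hS2 1 2 1 (by norm_num) (by norm_num) (by norm_num) v hv v1 hv1),
      Finset.sum_const, smul_eq_mul,
      Finset.sum_congr rfl (fun v hv =>
        hS2 1 1 2 (by norm_num) (by norm_num) (by norm_num) v hv v2 hv2),
      Finset.sum_const, smul_eq_mul] at h
    exact h
  -- cast to ℝ
  have rA : ((sph G 1 v1 ∩ sph G 0 v0).card : ℝ) = 1 := by exact_mod_cast e110
  have rD : ((sph G 2 v1 ∩ sph G 0 v0).card : ℝ) = 0 := by exact_mod_cast e120
  have rH : ((sph G 1 v2 ∩ sph G 0 v0).card : ℝ) = 0 := by exact_mod_cast e210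
  have rJ : ((sph G 2 v2 ∩ sph G 0 v0).card : ℝ) = 1 := by exact_mod_cast e220
  have rC : ((sph G 1 v1 ∩ sph G 2 v0).card : ℝ) = μ1 - 1 - m := by
    have h : ((sph G 1 v0).card : ℝ)
        = 1 + ((sph G 1 v1 ∩ sph G 1 v0).card : ℝ)
          + ((sph G 1 v1 ∩ sph G 2 v0).card : ℝ) := by exact_mod_cast P3
    rw [← hμ1, ← hm] at h
    linarith
  have rE : ((sph G 2 v1 ∩ sph G 1 v0).card : ℝ) = μ1 - 1 - m := by
    have h : ((sph G 1 v0).card : ℝ)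
        = 1 + ((sph G 1 v1 ∩ sph G 1 v0).card : ℝ)
          + ((sph G 2 v1 ∩ sph G 1 v0).card : ℝ) := by exact_mod_cast P1
    rw [← hμ1, ← hm] at h
    linarith
  have rF : ((sph G 2 v1 ∩ sph G 2 v0).card : ℝ) = μ2 - μ1 + 1 + m := by
    have h : ((sph G 2 v0).card : ℝ)
        = 0 + ((sph G 1 v1 ∩ sph G 2 v0).card : ℝ)
          + ((sph G 2 v1 ∩ sph G 2 v0).card : ℝ) := by exact_mod_cast P2
    rw [← hμ2, rC] at h
    linarith
  have key : μ2 * ((sph G 1 v2 ∩ sph G 1 v0).card : ℝ) = μ1 * (μ1 - 1 - m) := by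
    have h : ((sph G 1 v0).card : ℝ) * ((sph G 1 v1 ∩ sph G 2 v0).card : ℝ)
        = ((sph G 2 v0).card : ℝ) * ((sph G 1 v2 ∩ sph G 1 v0).card : ℝ) := by
      exact_mod_cast DC
    rw [← hμ1, ← hμ2, rC] at h
    linarith
  have rI : ((sph G 1 v2 ∩ sph G 2 v0).card : ℝ)
      = μ1 - ((sph G 1 v2 ∩ sph G 1 v0).card : ℝ) := by
    have h : ((sph G 1 v0).card : ℝ)
        = 0 + ((sph G 1 v2 ∩ sph G 1 v0).card : ℝ)
          + ((sph G 1 v2 ∩ sph G 2 v0).card : ℝ) := by exact_mod_cast P4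
    rw [← hμ1] at h
    linarith
  have rK : ((sph G 2 v2 ∩ sph G 1 v0).card : ℝ)
      = μ1 - ((sph G 1 v2 ∩ sph G 1 v0).card : ℝ) := by
    have h : ((sph G 1 v0).card : ℝ)
        = 0 + ((sph G 1 v2 ∩ sph G 1 v0).card : ℝ)
          + ((sph G 2 v2 ∩ sph G 1 v0).card : ℝ) := by exact_mod_cast P5
    rw [← hμ1] at h
    linarith
  have rL : ((sph G 2 v2 ∩ sph G 2 v0).card : ℝ) = μ2 - 1 - (μ1 - ((sph G 1 v2 ∩ sph G 1 v0).card : ℝ)) := by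
    have h : ((sph G 2 v0).card : ℝ)
        = 1 + ((sph G 1 v2 ∩ sph G 2 v0).card : ℝ)
          + ((sph G 2 v2 ∩ sph G 2 v0).card : ℝ) := by exact_mod_cast P6
    rw [← hμ2, rI] at h
    linarith
  -- evaluate pcoefs
  have pe1 := fun (j k : ℕ) (hj : j ≤ 2) (hk : k ≤ 2) =>
    pcoef_eval G v0 hS1 hS2 1 j k (by norm_num) hj hk v1 hv1
  have pe2 := fun (j k : ℕ) (hj : j ≤ 2) (hk : k ≤ 2) =>
    pcoef_eval G v0 hS1 hS2 2 j k (by norm_num) hj hk v2 hv2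
  refine ⟨?_, ?_, ?_, ?_, ?_, ?_, ?_, ?_, ?_, ?_, ?_, ?_⟩
  · rw [pe1 1 0 (by norm_num) (by norm_num), rA, ← hμ1]
  · rw [pe1 1 1 (by norm_num) (by norm_num), ← hm, ← hμ1]
  · rw [pe1 1 2 (by norm_num) (by norm_num), rC, ← hμ1]
  · rw [pe1 2 0 (by norm_num) (by norm_num), rD]; simp
  · rw [pe2 1 0 (by norm_num) (by norm_num), rH]; simp
  · rw [pe1 2 1 (by norm_num) (by norm_num), rE, ← hμ2]
  · rw [pe2 1 1 (by norm_num) (by norm_num), ← hμ1]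
    rw [div_eq_div_iff hμ1ne hμ2ne]
    linarith [key]
  · rw [pe1 2 2 (by norm_num) (by norm_num), rF, ← hμ2]
  · rw [pe2 1 2 (by norm_num) (by norm_num), rI, ← hμ1]
    rw [div_eq_div_iff hμ1ne hμ2ne]
    linear_combination -key
  · rw [pe2 2 0 (by norm_num) (by norm_num), rJ, ← hμ2]
  · rw [pe2 2 1 (by norm_num) (by norm_num), rK, ← hμ2]
    field_simp
    linear_combination -key
  · rw [pe2 2 2 (by norm_num) (by norm_num), rL, ← hμ2]
    field_simp
    linear_combination key


end
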